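/- For a bounded linear operator A on a complex Banach space, if asc(A - λ) < ∞ then A has the single-valued extension property (SVEP) at λ. -/

import Mathlib

open Filter Metric Set Asymptotics Topology

namespace Paper

variable {X : Type*} [NormedAddCommGroup X] [NormedSpace ℂ X] [CompleteSpace X]

/-- The ascent of an operator: the least `n` with `ker Tⁿ = ker Tⁿ⁺¹`, `⊤` if none exists. -/
noncomputable def ascent (T : X →L[ℂ] X) : ℕ∞ :=
  sInf ((↑) '' {n : ℕ | LinearMap.ker (↑(T ^ n) : X →ₗ[ℂ] X) = LinearMap.ker (↑(T ^ (n + 1)) : X →ₗ[ℂ] X)})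

/-- The descent of an operator: the least `n` with `range Tⁿ = range Tⁿ⁺¹`, `⊤` if none exists. -/
noncomputable def descent (T : X →L[ℂ] X) : ℕ∞ :=
  sInf ((↑) '' {n : ℕ | LinearMap.range (↑(T ^ n) : X →ₗ[ℂ] X) = LinearMap.range (↑(T ^ (n + 1)) : X →ₗ[ℂ] X)})

/-- `T` has the single-valued extension property at `z₀`. -/
def HasSVEPAt (T : X →L[ℂ] X) (z₀ : ℂ) : Prop :=
  ∀ r > (0 : ℝ), ∀ f : ℂ → X, AnalyticOnNhd ℂ f (ball z₀ r) →
    (∀ z ∈ ball z₀ r, T (f z) - z • f z = 0) → ∀ z ∈ ball z₀ r, f z = 0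

/-- The approximate point spectrum: points where `T - z` is not bounded below. -/
def aspectrum (T : X →L[ℂ] X) : Set ℂ :=
  {z | ¬ ∃ c > (0 : ℝ), ∀ x : X, c * ‖x‖ ≤ ‖(T - z • 1) x‖}

/-- The isolated points of a set `S ⊆ ℂ`. -/
def iso (S : Set ℂ) : Set ℂ := {z ∈ S | 𝓝[S \ {z}] z = ⊥}

/-- The set `Π(T)` of poles of the resolvent of `T`. -/
noncomputable def poles (T : X →L[ℂ] X) : Set ℂ :=
  {z ∈ spectrum ℂ T | ascent (T - z • 1) = descent (T - z • 1) ∧ ascent (T - z • 1) ≠ ⊤}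

/-- The set `Π^a(T)` of left poles of `T`. -/
noncomputable def leftPoles (T : X →L[ℂ] X) : Set ℂ :=
  {z ∈ aspectrum T | ∃ d : ℕ, ascent (T - z • 1) = (d : ℕ∞) ∧
    IsClosed ((LinearMap.range (↑((T - z • 1) ^ (d + 1)) : X →ₗ[ℂ] X) : Submodule ℂ X) : Set X)}

/-- `E(T)`: eigenvalues of `T` which are isolated points of the spectrum. -/
def eigE (T : X →L[ℂ] X) : Set ℂ :=
  {z ∈ iso (spectrum ℂ T) | ∃ x : X, x ≠ 0 ∧ T x = z • x}

/-- `E^a(T)`: eigenvalues of `T` which are isolated points of the approximate point spectrum. -/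
def eigEa (T : X →L[ℂ] X) : Set ℂ :=
  {z ∈ iso (aspectrum T) | ∃ x : X, x ≠ 0 ∧ T x = z • x}

/-- Fredholm operator. -/
def IsFredholm (T : X →L[ℂ] X) : Prop :=
  FiniteDimensional ℂ (LinearMap.ker (T : X →ₗ[ℂ] X)) ∧
  IsClosed ((LinearMap.range (T : X →ₗ[ℂ] X) : Submodule ℂ X) : Set X) ∧
  FiniteDimensional ℂ (X ⧸ (LinearMap.range (T : X →ₗ[ℂ] X) : Submodule ℂ X))

/-- The Fredholm index `α(T) - β(T)`. -/
noncomputable def fredIndex (T : X →L[ℂ] X) : ℤ :=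
  (Module.finrank ℂ (LinearMap.ker (T : X →ₗ[ℂ] X)) : ℤ) -
    (Module.finrank ℂ (X ⧸ (LinearMap.range (T : X →ₗ[ℂ] X) : Submodule ℂ X)) : ℤ)

/-- The Weyl spectrum `σ_w(T)`. -/
noncomputable def weylSpec (T : X →L[ℂ] X) : Set ℂ :=
  {z ∈ spectrum ℂ T | ¬ (IsFredholm (T - z • 1) ∧ fredIndex (T - z • 1) = 0)}

/-- Upper semi-Fredholm operator. -/
def IsUpperSemiFredholm (T : X →L[ℂ] X) : Prop :=
  FiniteDimensional ℂ (LinearMap.ker (T : X →ₗ[ℂ] X)) ∧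
  IsClosed ((LinearMap.range (T : X →ₗ[ℂ] X) : Submodule ℂ X) : Set X)

/-- `ind T ≤ 0`, allowing an infinite-dimensional cokernel. -/
def indexLE0 (T : X →L[ℂ] X) : Prop :=
  (Module.finrank ℂ (LinearMap.ker (T : X →ₗ[ℂ] X)) : Cardinal) ≤
    Module.rank ℂ (X ⧸ (LinearMap.range (T : X →ₗ[ℂ] X) : Submodule ℂ X))

/-- The approximate (left) Weyl spectrum `σ_aw(T)`. -/
noncomputable def aweylSpec (T : X →L[ℂ] X) : Set ℂ :=
  {z ∈ aspectrum T | ¬ (IsUpperSemiFredholm (T - z • 1) ∧ indexLE0 (T - z • 1))}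

/-- The restriction of `T` to the invariant subspace `range (Tⁿ)`. -/
noncomputable def restr (T : X →L[ℂ] X) (n : ℕ) :
    (LinearMap.range (↑(T ^ n) : X →ₗ[ℂ] X) : Submodule ℂ X) →ₗ[ℂ] (LinearMap.range (↑(T ^ n) : X →ₗ[ℂ] X) : Submodule ℂ X) :=
  (T : X →ₗ[ℂ] X).restrict (fun x hx => by
    obtain ⟨y, hy⟩ := hx
    refine LinearMap.mem_range.mpr ⟨T y, ?_⟩
    have h : (T ^ n) * T = T * (T ^ n) := ((Commute.refl T).pow_left n).eq
    calc (T ^ n) (T y) = ((T ^ n) * T) y := rfl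
      _ = (T * T ^ n) y := by rw [h]
      _ = T ((T ^ n) y) := rfl
      _ = T x := congrArg T hy)

/-- `T` is B-Weyl: for some `n`, `range (Tⁿ)` is closed and the restriction of `T` to it is
Fredholm of index `0`. -/
noncomputable def IsBWeyl (T : X →L[ℂ] X) : Prop :=
  ∃ n : ℕ, IsClosed ((LinearMap.range (↑(T ^ n) : X →ₗ[ℂ] X) : Submodule ℂ X) : Set X) ∧
    FiniteDimensional ℂ (LinearMap.ker (restr T n)) ∧
    IsClosed ((LinearMap.range (restr T n) :
        Submodule ℂ (LinearMap.range (↑(T ^ n) : X →ₗ[ℂ] X) : Submodule ℂ X)) :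
      Set (LinearMap.range (↑(T ^ n) : X →ₗ[ℂ] X) : Submodule ℂ X)) ∧
    FiniteDimensional ℂ
      ((LinearMap.range (↑(T ^ n) : X →ₗ[ℂ] X) : Submodule ℂ X) ⧸ LinearMap.range (restr T n)) ∧
    Module.finrank ℂ (LinearMap.ker (restr T n)) =
      Module.finrank ℂ ((LinearMap.range (↑(T ^ n) : X →ₗ[ℂ] X) : Submodule ℂ X) ⧸ LinearMap.range (restr T n))

/-- `T` is upper B-Weyl: for some `n`, `range (Tⁿ)` is closed and the restriction of `T` to it is
upper semi-Fredholm of index `≤ 0`. -/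
noncomputable def IsUpperBWeyl (T : X →L[ℂ] X) : Prop :=
  ∃ n : ℕ, IsClosed ((LinearMap.range (↑(T ^ n) : X →ₗ[ℂ] X) : Submodule ℂ X) : Set X) ∧
    FiniteDimensional ℂ (LinearMap.ker (restr T n)) ∧
    IsClosed ((LinearMap.range (restr T n) :
        Submodule ℂ (LinearMap.range (↑(T ^ n) : X →ₗ[ℂ] X) : Submodule ℂ X)) :
      Set (LinearMap.range (↑(T ^ n) : X →ₗ[ℂ] X) : Submodule ℂ X)) ∧
    (Module.finrank ℂ (LinearMap.ker (restr T n)) : Cardinal) ≤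
      Module.rank ℂ ((LinearMap.range (↑(T ^ n) : X →ₗ[ℂ] X) : Submodule ℂ X) ⧸ LinearMap.range (restr T n))

/-- The B-Weyl spectrum `σ_Bw(T)`. -/
noncomputable def bweylSpec (T : X →L[ℂ] X) : Set ℂ :=
  {z ∈ spectrum ℂ T | ¬ IsBWeyl (T - z • 1)}

/-- The upper B-Weyl spectrum `σ_uBw(T)`. -/
noncomputable def ubweylSpec (T : X →L[ℂ] X) : Set ℂ :=
  {z ∈ aspectrum T | ¬ IsUpperBWeyl (T - z • 1)}

/-- `Φ^iso_Bw(T) = iso σ_w(T) ∩ σ_Bw(T)ᶜ`. -/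
noncomputable def phiIsoBw (T : X →L[ℂ] X) : Set ℂ := iso (weylSpec T) ∩ (bweylSpec T)ᶜ

/-- `Φ^iso_uBw(T) = iso σ_aw(T) ∩ σ_uBw(T)ᶜ`. -/
noncomputable def phiIsoUBw (T : X →L[ℂ] X) : Set ℂ := iso (aweylSpec T) ∩ (ubweylSpec T)ᶜ

/-- `T` is polaroid: isolated spectral points are poles. -/
noncomputable def Polaroid (T : X →L[ℂ] X) : Prop := iso (spectrum ℂ T) ⊆ poles T

/-- `T` is left polaroid: isolated points of `σ_a(T)` are left poles. -/
noncomputable def LeftPolaroid (T : X →L[ℂ] X) : Prop := iso (aspectrum T) ⊆ leftPoles T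

/-- `T` is a-polaroid: isolated points of `σ_a(T)` are poles. -/
noncomputable def APolaroid (T : X →L[ℂ] X) : Prop := iso (aspectrum T) ⊆ poles T

/-- Property `(P1)`: `E(T) = Π^a(T)`. -/
noncomputable def P1 (T : X →L[ℂ] X) : Prop := eigE T = leftPoles T

/-- Property `(P2)`: `E^a(T) = Π(T)`. -/
noncomputable def P2 (T : X →L[ℂ] X) : Prop := eigEa T = poles T

/-- The resolvent of `T` has a pole (finite-order singularity) at `z₀`. -/
noncomputable def HasResolventPoleAt (T : X →L[ℂ] X) (z₀ : ℂ) : Prop :=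
  z₀ ∈ iso (spectrum ℂ T) ∧ ∃ n : ℕ, 0 < n ∧
    (fun z => (z - z₀) ^ n • resolvent T z) =O[𝓝[≠] z₀] (fun _ => (1 : ℝ))

/-- A holomorphic (Riesz) functional calculus for `T` on an open neighbourhood `U ⊇ σ(T)`:
an algebra homomorphism on functions holomorphic on `U`, sending `1 ↦ 1`, `id ↦ T`, and
satisfying the spectral mapping theorem for the spectrum and approximate point spectrum. -/
structure HoloCalcOn (T : X →L[ℂ] X) (U : Set ℂ) where
  isOpen : IsOpen U
  spec_subset : spectrum ℂ T ⊆ U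
  toFun : (ℂ → ℂ) → (X →L[ℂ] X)
  map_one : toFun (fun _ => 1) = 1
  map_id : toFun id = T
  map_add : ∀ f g : ℂ → ℂ, AnalyticOnNhd ℂ f U → AnalyticOnNhd ℂ g U →
    toFun (f + g) = toFun f + toFun g
  map_mul : ∀ f g : ℂ → ℂ, AnalyticOnNhd ℂ f U → AnalyticOnNhd ℂ g U →
    toFun (f * g) = toFun f * toFun g
  map_smul : ∀ (c : ℂ) (f : ℂ → ℂ), AnalyticOnNhd ℂ f U → toFun (c • f) = c • toFun f
  spec_map : ∀ f : ℂ → ℂ, AnalyticOnNhd ℂ f U → spectrum ℂ (toFun f) = f '' spectrum ℂ T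
  aspec_map : ∀ f : ℂ → ℂ, AnalyticOnNhd ℂ f U → aspectrum (toFun f) = f '' aspectrum T

/-- `f` is non-constant on each connected component of `σ(T)`. -/
def NonConstOnSpecComponents (T : X →L[ℂ] X) (f : ℂ → ℂ) : Prop :=
  ∀ z ∈ spectrum ℂ T, ∃ w ∈ connectedComponentIn (spectrum ℂ T) z, f w ≠ f z

/-! Let `S = A - z` and let `f` be analytic near `z` with `S (f w) = (w - z) • f w`. The Taylor
coefficients `aₖ` of `f` at `z`, i.e. the values at `z` of the iterated difference quotients
`dslope`, form an infinite Jordan chain: `S a₀ = 0` and `S aₖ₊₁ = aₖ`. Then `aₖ = Sᵖ aₖ₊ₚ` while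
`aₖ₊ₚ ∈ ker Sᵏ⁺ᵖ⁺¹ = ker Sᵖ` once the kernels have stabilised at `p`, so every coefficient
vanishes; `f` is then zero near `z`, hence on the whole disc by the identity theorem. -/

open Function

theorem _root_.Module.End.eq_zero_of_apply_succ_eq {K V : Type*} [DivisionRing K] [AddCommGroup V]
    [Module K V] {T : Module.End K V} {p : ℕ}
    (hp : LinearMap.ker (T ^ p) = LinearMap.ker (T ^ (p + 1)))
    {a : ℕ → V} (h₀ : T (a 0) = 0) (hsucc : ∀ k, T (a (k + 1)) = a k) (k : ℕ) : a k = 0 := by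
  have hker : ∀ k, (T ^ (k + 1)) (a k) = 0 := by
    intro k
    induction k with
    | zero => simpa using h₀
    | succ k ih => rw [pow_succ, Module.End.mul_apply, hsucc, ih]
  have hdown : ∀ m, (T ^ m) (a (k + m)) = a k := by
    intro m
    induction m with
    | zero => simp
    | succ m ih => rw [pow_succ, Module.End.mul_apply, ← add_assoc, hsucc, ih]
  have hmem : a (k + p) ∈ LinearMap.ker (T ^ p) := by
    rw [Module.End.ker_pow_constant hp (k + 1), LinearMap.mem_ker,
      show p + (k + 1) = k + p + 1 by omega]
    exact hker (k + p)
  rw [← hdown p, LinearMap.mem_ker.mp hmem]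

theorem exists_ker_pow_eq_ker_pow_succ_of_ascent_ne_top {E : Type*} [NormedAddCommGroup E]
    [NormedSpace ℂ E] {T : E →L[ℂ] E} (h : ascent T ≠ ⊤) :
    ∃ p : ℕ, LinearMap.ker ((T : E →ₗ[ℂ] E) ^ p) = LinearMap.ker ((T : E →ₗ[ℂ] E) ^ (p + 1)) := by
  by_contra! hne
  refine h (sInf_eq_top.mpr ?_)
  rintro _ ⟨p, hp, rfl⟩
  exact absurd (by simpa using hp) (hne p)

section Dslope

variable {𝕜 E : Type*} [NontriviallyNormedField 𝕜] [NormedAddCommGroup E] [NormedSpace 𝕜 E]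
  {T : E →L[𝕜] E} {f g : 𝕜 → E} {z : 𝕜} {c : E}

theorem apply_eq_of_eventually_apply_eq_sub_smul_add (hg : ContinuousAt g z)
    (h : ∀ᶠ w in 𝓝[≠] z, T (g w) = (w - z) • g w + c) : T (g z) = c := by
  have hlim : Tendsto (fun w => (w - z) • g w + c) (𝓝[≠] z) (𝓝 ((z - z) • g z + c)) :=
    (((continuous_sub_right z).continuousAt.smul hg).add continuousAt_const).continuousWithinAt
  rw [sub_self, zero_smul, zero_add] at hlim
  exact tendsto_nhds_unique ((T.continuous.continuousAt.comp hg).continuousWithinAt.tendsto)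
    (hlim.congr' (h.mono fun _ hw => hw.symm))

theorem eventually_apply_dslope_eq (hg : ContinuousAt g z)
    (h : ∀ᶠ w in 𝓝[≠] z, T (g w) = (w - z) • g w + c) :
    ∀ᶠ w in 𝓝[≠] z, T (dslope g z w) = (w - z) • dslope g z w + g z := by
  have hgz := apply_eq_of_eventually_apply_eq_sub_smul_add hg h
  filter_upwards [h, self_mem_nhdsWithin] with w hw hwz
  -- for `w ≠ z` both sides equal `g w`
  have hwz' : w - z ≠ 0 := sub_ne_zero.mpr hwz
  rw [sub_smul_dslope, sub_add_cancel, dslope_of_ne _ hwz, slope_def_module, map_smul, map_sub,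
    hw, hgz, add_sub_cancel_right, smul_smul, inv_mul_cancel₀ hwz', one_smul]

theorem _root_.HasFPowerSeriesAt.apply_iterate_dslope_succ_eq
    {p : FormalMultilinearSeries 𝕜 𝕜 E} (hf : HasFPowerSeriesAt f p z)
    (h : ∀ᶠ w in 𝓝[≠] z, T (f w) = (w - z) • f w) (k : ℕ) :
    T ((swap dslope z)^[k + 1] f z) = (swap dslope z)^[k] f z := by
  have hcont : ∀ n, ContinuousAt ((swap dslope z)^[n] f) z := fun n =>
    (hf.has_fpower_series_iterate_dslope_fslope n).continuousAt
  have hrel : ∀ n, ∀ᶠ w in 𝓝[≠] z,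
      T ((swap dslope z)^[n + 1] f w) = (w - z) • (swap dslope z)^[n + 1] f w
        + (swap dslope z)^[n] f z := by
    intro n
    induction n with
    | zero => exact eventually_apply_dslope_eq (hcont 0) (c := 0) (by simpa using h)
    | succ n ih =>
      rw [iterate_succ_apply' _ (n + 1)]
      exact eventually_apply_dslope_eq (hcont (n + 1)) ih
  exact apply_eq_of_eventually_apply_eq_sub_smul_add (hcont (k + 1)) (hrel k)

theorem _root_.HasFPowerSeriesAt.eventually_eq_zero_of_iterate_dslope_eq_zero
    {p : FormalMultilinearSeries 𝕜 𝕜 E} (hf : HasFPowerSeriesAt f p z)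
    (h : ∀ k, (swap dslope z)^[k] f z = 0) : f =ᶠ[𝓝 z] 0 :=
  hf.locally_zero_iff.mpr (by_contra fun hp => hf.iterate_dslope_fslope_ne_zero hp (h p.order))

end Dslope

/-- finite ascent of `A - λ` implies SVEP at `λ`. -/
theorem hasSVEPAt_of_finite_ascent (A : X →L[ℂ] X) (z : ℂ)
    (h : ascent (A - z • 1) ≠ ⊤) : HasSVEPAt A z := by
  obtain ⟨p, hp⟩ := exists_ker_pow_eq_ker_pow_succ_of_ascent_ne_top h
  intro r hr f hf heig w hw
  obtain ⟨q, hq⟩ := hf z (mem_ball_self hr)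
  have hrel : ∀ᶠ u in 𝓝[≠] z, (A - z • 1) (f u) = (u - z) • f u := by
    filter_upwards [nhdsWithin_le_nhds (isOpen_ball.mem_nhds (mem_ball_self hr))] with u hu
    simp [sub_smul, sub_eq_zero.mp (heig u hu)]
  have h₀ : (A - z • 1) (f z) = 0 :=
    apply_eq_of_eventually_apply_eq_sub_smul_add (c := 0) hq.continuousAt (by simpa using hrel)
  have hcoeff : ∀ k, (swap dslope z)^[k] f z = 0 :=
    Module.End.eq_zero_of_apply_succ_eq (a := fun k => (swap dslope z)^[k] f z) hp h₀
      (hq.apply_iterate_dslope_succ_eq hrel)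
  exact hf.eqOn_zero_of_preconnected_of_eventuallyEq_zero (convex_ball z r).isPreconnected
    (mem_ball_self hr) (hq.eventually_eq_zero_of_iterate_dslope_eq_zero hcoeff) hw

end Paper
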